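/- Let C₀>0, τ>0 and 0<μ<μ_τ, and let u ∈ ℰ_{τ,μ}(C₀). Then for every x∈ℝ: 0 ≤ V(x;u) ≤ V⁺(x), where V⁺(x) = min{C₀, e^{−μx}/(1+τμc_μ−μ²)}. -/

import Mathlib

/-
Write the kernel of `V` as `e^{-s}` times the heat kernel `Γ_s`, which has mass one. The bound
`u ≤ C₀` then gives `V ≤ C₀ ∫₀^∞ e^{-s} ds = C₀`. For the exponential bound,
`u(z + τ c_μ s) ≤ e^{-μτc_μ s} e^{-μz}`, and completing the square gives
`∫ Γ_s(x - z) e^{-μz} dz = e^{μ²s - μx}`; the `s`-integrand is thus at most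
`e^{-μx} e^{-(1 + τμc_μ - μ²)s}`, and `μ < μ_τ` is what makes this rate positive.
-/

open Real Filter MeasureTheory Set

/-- `c_μ = μ + a/μ`. -/
noncomputable def cmu (a μ : ℝ) : ℝ := μ + a / μ

/-- `μ_τ = √a` if `τ ≥ 1`, and `min{√a, √((1+τa)/(1−τ))}` if `0 < τ < 1`. -/
noncomputable def muTau (a τ : ℝ) : ℝ :=
  if 1 ≤ τ then Real.sqrt a else min (Real.sqrt a) (Real.sqrt ((1 + τ * a) / (1 - τ)))

/-- Condition (H) on `(τ, μ, χ)`. -/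
noncomputable def condH (a b τ μ χ : ℝ) : Prop :=
  1 + τ * cmu a μ < (b - χ) / χ ∧
  (μ + τ * cmu a μ) / Real.sqrt (1 + τ * μ * cmu a μ - μ ^ 2)
      + μ * (μ + τ * cmu a μ) / (1 + τ * μ * cmu a μ - μ ^ 2) ≤ (b - χ) / χ

/-- `V(x;u) = ∫₀^∞ ∫_ℝ (e^{−s}/√(4πs)) e^{−(x−z)²/(4s)} u(z+τcs) dz ds`. -/
noncomputable def Vfun (τ c : ℝ) (u : ℝ → ℝ) (x : ℝ) : ℝ :=
  ∫ s in Set.Ioi (0:ℝ), ∫ z : ℝ,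
    (Real.exp (-s) / Real.sqrt (4 * Real.pi * s)) * Real.exp (-(x - z) ^ 2 / (4 * s))
      * u (z + τ * c * s)

/-- `U⁺(x) = min{C₀, e^{−μx}}`. -/
noncomputable def Uplus (μ C₀ : ℝ) (x : ℝ) : ℝ := min C₀ (Real.exp (-μ * x))

/-- `U⁻(x) = max{0, e^{−μx} − d e^{−μ̃x}}`. -/
noncomputable def Uminus (μ μt d : ℝ) (x : ℝ) : ℝ :=
  max 0 (Real.exp (-μ * x) - d * Real.exp (-μt * x))

/-- `u ∈ ℰ_{τ,μ}(C₀)` (built from `μ̃` and `d`): bounded uniformly continuous with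
`U⁻ ≤ u ≤ U⁺`. -/
def memE (μ C₀ μt d : ℝ) (u : ℝ → ℝ) : Prop :=
  UniformContinuous u ∧ ∀ x, Uminus μ μt d x ≤ u x ∧ u x ≤ Uplus μ C₀ x

noncomputable def heatKernel (s y : ℝ) : ℝ :=
  Real.exp (-y ^ 2 / (4 * s)) / Real.sqrt (4 * π * s)

lemma mul_cmu {a μ : ℝ} (hμ : μ ≠ 0) : μ * cmu a μ = μ ^ 2 + a := by
  unfold cmu
  field_simp

lemma one_add_mul_cmu_sub_sq_pos {a τ μ : ℝ} (ha : 0 < a) (hμ0 : 0 < μ) (hμ : μ < muTau a τ) :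
    0 < 1 + τ * μ * cmu a μ - μ ^ 2 := by
  rw [mul_assoc, mul_cmu hμ0.ne']
  unfold muTau at hμ
  split_ifs at hμ with hτ
  · nlinarith
  · have hτ' : 0 < 1 - τ := by linarith
    have hsq : μ ^ 2 < (1 + τ * a) / (1 - τ) :=
      (Real.lt_sqrt hμ0.le).mp (hμ.trans_le (min_le_right _ _))
    nlinarith [(lt_div_iff₀ hτ').mp hsq]

section heatKernel

variable {s : ℝ}

lemma heatKernel_nonneg (y : ℝ) : 0 ≤ heatKernel s y := by
  unfold heatKernel
  positivity

lemma heatKernel_eq_gaussian (hs : 0 < s) (x z : ℝ) :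
    heatKernel s (x - z) = Real.exp (-(1 / (4 * s)) * (z - x) ^ 2) / Real.sqrt (4 * π * s) := by
  unfold heatKernel
  congr 2
  field_simp
  ring

lemma integrable_heatKernel (hs : 0 < s) (x : ℝ) : Integrable fun z => heatKernel s (x - z) := by
  simp_rw [heatKernel_eq_gaussian hs x]
  exact ((integrable_exp_neg_mul_sq (by positivity)).comp_sub_right x).div_const _

lemma integral_heatKernel (hs : 0 < s) (x : ℝ) : ∫ z, heatKernel s (x - z) = 1 := by
  simp_rw [heatKernel_eq_gaussian hs x]
  rw [integral_div, integral_sub_right_eq_self (fun z => Real.exp (-(1 / (4 * s)) * z ^ 2)),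
    integral_gaussian, div_eq_one_iff_eq (by positivity)]
  congr 1
  field_simp

-- Completing the square in the exponent.
lemma heatKernel_mul_exp (hs : 0 < s) (μ x z : ℝ) :
    heatKernel s (x - z) * Real.exp (-μ * z)
      = Real.exp (μ ^ 2 * s - μ * x) * heatKernel s (x - 2 * μ * s - z) := by
  unfold heatKernel
  rw [div_mul_eq_mul_div, mul_div_assoc', div_left_inj' (by positivity), ← Real.exp_add,
    ← Real.exp_add]
  congr 1
  field_simp
  ring

lemma integral_heatKernel_mul_le_const (hs : 0 < s) {u : ℝ → ℝ} {C : ℝ} (hu0 : ∀ y, 0 ≤ u y)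
    (huC : ∀ y, u y ≤ C) (x : ℝ) :
    ∫ z, heatKernel s (x - z) * u z ≤ C := by
  calc ∫ z, heatKernel s (x - z) * u z
      ≤ ∫ z, heatKernel s (x - z) * C :=
        integral_mono_of_nonneg
          (.of_forall fun z => mul_nonneg (heatKernel_nonneg _) (hu0 z))
          ((integrable_heatKernel hs x).mul_const C)
          (.of_forall fun z => mul_le_mul_of_nonneg_left (huC z) (heatKernel_nonneg _))
    _ = C := by rw [integral_mul_const, integral_heatKernel hs, one_mul]

lemma integral_heatKernel_mul_le_exp (hs : 0 < s) {u : ℝ → ℝ} {K μ : ℝ} (hu0 : ∀ y, 0 ≤ u y)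
    (huE : ∀ y, u y ≤ K * Real.exp (-μ * y)) (x : ℝ) :
    ∫ z, heatKernel s (x - z) * u z ≤ K * Real.exp (μ ^ 2 * s - μ * x) := by
  have hshift : ∀ z, heatKernel s (x - z) * (K * Real.exp (-μ * z))
      = K * Real.exp (μ ^ 2 * s - μ * x) * heatKernel s (x - 2 * μ * s - z) := fun z => by
    rw [mul_left_comm, heatKernel_mul_exp hs, ← mul_assoc]
  calc ∫ z, heatKernel s (x - z) * u z
      ≤ ∫ z, heatKernel s (x - z) * (K * Real.exp (-μ * z)) := by
        refine integral_mono_of_nonneg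
          (.of_forall fun z => mul_nonneg (heatKernel_nonneg _) (hu0 z)) ?_
          (.of_forall fun z => mul_le_mul_of_nonneg_left (huE z) (heatKernel_nonneg _))
        simp_rw [hshift]
        exact (integrable_heatKernel hs _).const_mul _
    _ = K * Real.exp (μ ^ 2 * s - μ * x) := by
        simp_rw [hshift]
        rw [integral_const_mul, integral_heatKernel hs, mul_one]

end heatKernel

lemma setIntegral_Ioi_le_of_le_exp {g : ℝ → ℝ} {K β : ℝ} (hβ : 0 < β)
    (hg0 : ∀ s ∈ Ioi (0 : ℝ), 0 ≤ g s) (hgK : ∀ s ∈ Ioi (0 : ℝ), g s ≤ K * Real.exp (-β * s)) :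
    ∫ s in Ioi 0, g s ≤ K / β := by
  calc ∫ s in Ioi 0, g s ≤ ∫ s in Ioi 0, K * Real.exp (-β * s) :=
        integral_mono_of_nonneg ((ae_restrict_iff' measurableSet_Ioi).mpr (.of_forall hg0))
          ((integrableOn_exp_mul_Ioi (by linarith) 0).const_mul K)
          ((ae_restrict_iff' measurableSet_Ioi).mpr (.of_forall hgK))
    _ = K / β := by
        rw [integral_const_mul, integral_exp_mul_Ioi (by linarith)]
        field_simp
        simp

lemma Vfun_eq (τ c : ℝ) (u : ℝ → ℝ) (x : ℝ) :
    Vfun τ c u x = ∫ s in Ioi 0,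
      Real.exp (-s) * ∫ z, heatKernel s (x - z) * u (z + τ * c * s) := by
  unfold Vfun heatKernel
  congr 1
  ext s
  rw [← integral_const_mul]
  congr 1
  ext z
  ring

theorem Vfun_bounds_general (a τ μ : ℝ) (ha : 0 < a)
    (hμ0 : 0 < μ) (hμ : μ < muTau a τ)
    (C₀ : ℝ)
    (μt d : ℝ)
    (u : ℝ → ℝ) (hu : memE μ C₀ μt d u) :
    ∀ x : ℝ, 0 ≤ Vfun τ (cmu a μ) u x ∧
      Vfun τ (cmu a μ) u x
        ≤ min C₀ (Real.exp (-μ * x) / (1 + τ * μ * cmu a μ - μ ^ 2)) := by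
  intro x
  obtain ⟨-, hbounds⟩ := hu
  have hu0 (y : ℝ) : 0 ≤ u y := (le_max_left _ _).trans (hbounds y).1
  have huC (y : ℝ) : u y ≤ C₀ := (hbounds y).2.trans (min_le_left _ _)
  have huE (s z : ℝ) : u (z + τ * cmu a μ * s)
      ≤ Real.exp (-μ * τ * cmu a μ * s) * Real.exp (-μ * z) := by
    rw [← Real.exp_add]
    exact (hbounds _).2.trans ((min_le_right _ _).trans_eq (by ring_nf))
  have hterm0 (s : ℝ) :
      0 ≤ Real.exp (-s) * ∫ z, heatKernel s (x - z) * u (z + τ * cmu a μ * s) :=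
    mul_nonneg (Real.exp_pos _).le
      (integral_nonneg fun z => mul_nonneg (heatKernel_nonneg _) (hu0 _))
  rw [Vfun_eq]
  refine ⟨setIntegral_nonneg measurableSet_Ioi fun s _ => hterm0 s, le_min ?_ ?_⟩
  · refine (setIntegral_Ioi_le_of_le_exp one_pos (fun s _ => hterm0 s) fun s hs => ?_).trans_eq
      (div_one C₀)
    rw [neg_one_mul, mul_comm C₀]
    exact mul_le_mul_of_nonneg_left
      (integral_heatKernel_mul_le_const hs (fun _ => hu0 _) (fun _ => huC _) x)
      (Real.exp_pos _).le
  · refine setIntegral_Ioi_le_of_le_exp (one_add_mul_cmu_sub_sq_pos ha hμ0 hμ)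
      (fun s _ => hterm0 s) fun s hs => ?_
    calc _ ≤ Real.exp (-s) * (Real.exp (-μ * τ * cmu a μ * s) * Real.exp (μ ^ 2 * s - μ * x)) :=
          mul_le_mul_of_nonneg_left
            (integral_heatKernel_mul_le_exp hs (fun _ => hu0 _) (huE s) x) (Real.exp_pos _).le
      _ = _ := by
          simp only [← Real.exp_add]
          ring_nf

/-- Lemma 3.2: for `u ∈ ℰ_{τ,μ}(C₀)`,
`0 ≤ V(x;u) ≤ V⁺(x) = min{C₀, e^{−μx}/(1+τμc_μ−μ²)}`. -/
theorem Vfun_bounds (a b τ μ : ℝ) (ha : 0 < a) (hb : 0 < b) (hτ : 0 < τ)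
    (hμ0 : 0 < μ) (hμ : μ < muTau a τ)
    (C₀ : ℝ) (hC₀ : 0 < C₀)
    (μt d : ℝ) (hμt₁ : μ < μt) (hμt₂ : μt < min (2 * μ) (muTau a τ))
    (hd : max 1 (C₀ ^ ((μ - μt) / μ)) < d)
    (u : ℝ → ℝ) (hu : memE μ C₀ μt d u) :
    ∀ x : ℝ, 0 ≤ Vfun τ (cmu a μ) u x ∧
      Vfun τ (cmu a μ) u x
        ≤ min C₀ (Real.exp (-μ * x) / (1 + τ * μ * cmu a μ - μ ^ 2)) :=
  Vfun_bounds_general a τ μ ha hμ0 hμ C₀ μt d u hu
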